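/- For any DMC W and any length-n error-free feedback code with two equiprobable messages, the erasure probability satisfies P_era ≥ (1/2) · (min_{x,x̃} ∑_y √(W(y|x) W(y|x̃)))^n, i.e., the erasure probability is lower bounded by half the n-th power of the minimum Bhattacharyya coefficient over input pairs. -/

import Mathlib

/-! On every output sequence to which both messages assign positive probability, a decoder that
makes no errors must erase, so by AM-GM `P_era ≥ ∑_y √(P(y|m₁) P(y|m₂))`. The right-hand side is a
sum of products `∏_t √(W(y_t|x_t) W(y_t|x̃_t))` whose inputs depend on the earlier outputs through
the feedback; summing out the last output first leaves a factor `∑_y √(W(y|x) W(y|x̃))`, at least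
the minimal Bhattacharyya coefficient `β` whatever the past was, so induction on the block length
gives `P_era ≥ β ^ n`. -/

open scoped BigOperators

/-- A fixed-length block code over input alphabet `X`, output alphabet `Y`, with
noiseless delay-free feedback, `M` messages, block length `n`, randomized decoding
with lists of size at most `L` and an erasure option (`none`). -/
structure FBCode (X Y : Type) [Fintype X] [Fintype Y] (M n L : ℕ) where
  enc : Fin M → (t : Fin n) → (Fin t.1 → Y) → X
  dec : (Fin n → Y) → Option (Finset (Fin M)) → ℝ
  dec_nonneg : ∀ y o, 0 ≤ dec y o
  dec_sum : ∀ y, ∑ o : Option (Finset (Fin M)), dec y o = 1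
  dec_size : ∀ y S, dec y (some S) ≠ 0 → S.card ≤ L

namespace FBCode

variable {X Y : Type} [Fintype X] [Fintype Y]

/-- Probability of observing output sequence `y` when message `m` is sent over the DMC `W`. -/
noncomputable def outProb (W : X → Y → ℝ) {M n L : ℕ} (c : FBCode X Y M n L)
    (m : Fin M) (y : Fin n → Y) : ℝ :=
  ∏ t : Fin n, W (c.enc m t (fun i => y ⟨i.1, lt_trans i.2 t.2⟩)) (y t)

/-- Erasure probability of the code, uniform prior on messages. -/
noncomputable def Pera (W : X → Y → ℝ) {M n L : ℕ} (c : FBCode X Y M n L) : ℝ :=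
  (M : ℝ)⁻¹ * ∑ m : Fin M, ∑ y : Fin n → Y, outProb W c m y * c.dec y none

/-- (Undetected) error probability of the code, uniform prior on messages. -/
noncomputable def Perr (W : X → Y → ℝ) {M n L : ℕ} (c : FBCode X Y M n L) : ℝ :=
  (M : ℝ)⁻¹ * ∑ m : Fin M, ∑ y : Fin n → Y,
    outProb W c m y * ∑ S : Finset (Fin M), if m ∈ S then 0 else c.dec y (some S)

end FBCode

/-- Minimum error probability of length-`n` feedback codes with `M` equiprobable
messages, list size `L`, erasure probability at most `p`. -/
noncomputable def PeMin {X Y : Type} [Fintype X] [Fintype Y] (W : X → Y → ℝ)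
    (M n L : ℕ) (p : ℝ) : ℝ :=
  sInf {e | ∃ c : FBCode X Y M n L, FBCode.Pera W c ≤ p ∧ FBCode.Perr W c = e}

/-- Minimum erasure probability of length-`n` error-free feedback codes with `M`
equiprobable messages and list size `L`. -/
noncomputable def PeraMin {X Y : Type} [Fintype X] [Fintype Y] (W : X → Y → ℝ)
    (M n L : ℕ) : ℝ :=
  sInf {r | ∃ c : FBCode X Y M n L, FBCode.Perr W c = 0 ∧ FBCode.Pera W c = r}

theorem pow_le_sum_prod_take {R Y : Type*} [CommSemiring R] [PartialOrder R] [IsOrderedRing R]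
    [Fintype Y] {β : R} (hβ : 0 ≤ β) :
    ∀ {n : ℕ} (K : (t : Fin n) → (Fin t → Y) → Y → R),
      (∀ t p y, 0 ≤ K t p y) → (∀ t p, β ≤ ∑ y, K t p y) →
      β ^ n ≤ ∑ y : Fin n → Y, ∏ t, K t (Fin.take t t.2.le y) (y t)
  | 0, _, _, _ => by simp
  | n + 1, K, hK0, hK => by
    have take_snoc (y : Fin n → Y) (a : Y) (t : Fin n) (h : t.1 ≤ n + 1) :
        Fin.take t h (fun i => Fin.snoc (α := fun _ => Y) y a i) = Fin.take t t.2.le y := by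
      rw [← Fin.take_init, Fin.init_snoc]
    have take_snoc_self (y : Fin n → Y) (a : Y) (h : n ≤ n + 1) :
        Fin.take n h (fun i => Fin.snoc (α := fun _ => Y) y a i) = y := by
      rw [← Fin.take_init n le_rfl, Fin.init_snoc, Fin.take_eq_self]
    have ih := pow_le_sum_prod_take hβ (fun t : Fin n => K t.castSucc)
      (fun t => hK0 t.castSucc) (fun t => hK t.castSucc)
    rw [← (Fin.snocEquiv fun _ => Y).sum_comp, Fintype.sum_prod_type_right]
    simp only [Fin.snocEquiv, Equiv.coe_fn_mk, Fin.prod_univ_castSucc, Fin.snoc_castSucc,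
      Fin.snoc_last, Fin.val_last, Fin.val_castSucc, take_snoc, take_snoc_self, ← Finset.mul_sum]
    calc β ^ (n + 1) = β ^ n * β := pow_succ β n
      _ ≤ (∑ y : Fin n → Y, ∏ t : Fin n, K t.castSucc (Fin.take t t.2.le y) (y t)) * β := by gcongr
      _ = ∑ y : Fin n → Y, (∏ t : Fin n, K t.castSucc (Fin.take t t.2.le y) (y t)) * β :=
        Finset.sum_mul ..
      _ ≤ _ := by
        gcongr with y
        · exact Finset.prod_nonneg fun t _ => hK0 _ _ _
        · exact hK _ _

noncomputable def bhattacharyya {X Y : Type*} [Fintype Y] (W : X → Y → ℝ) (x x' : X) : ℝ :=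
  ∑ y, √(W x y * W x' y)

theorem bhattacharyya_nonneg {X Y : Type*} [Fintype Y] (W : X → Y → ℝ) (x x' : X) :
    0 ≤ bhattacharyya W x x' :=
  Finset.sum_nonneg fun _ _ => Real.sqrt_nonneg _

theorem iInf_bhattacharyya_nonneg {X Y : Type*} [Fintype Y] (W : X → Y → ℝ) :
    0 ≤ ⨅ p : X × X, bhattacharyya W p.1 p.2 :=
  Real.iInf_nonneg fun p => bhattacharyya_nonneg W p.1 p.2

namespace FBCode

open Finset

variable {X Y : Type} [Fintype X] [Fintype Y] {W : X → Y → ℝ} {M n L : ℕ}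

theorem outProb_nonneg (c : FBCode X Y M n L) (hW0 : ∀ x y, 0 ≤ W x y) (m : Fin M)
    (y : Fin n → Y) :
    0 ≤ c.outProb W m y :=
  prod_nonneg fun _ _ => hW0 _ _

theorem pow_iInf_bhattacharyya_le_sum_sqrt_outProb (c : FBCode X Y M n L)
    (hW0 : ∀ x y, 0 ≤ W x y) (m m' : Fin M) :
    (⨅ p : X × X, bhattacharyya W p.1 p.2) ^ n
      ≤ ∑ y, √(c.outProb W m y * c.outProb W m' y) := by
  have hprod (y : Fin n → Y) : √(c.outProb W m y * c.outProb W m' y)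
      = ∏ t, √(W (c.enc m t (Fin.take t t.2.le y)) (y t)
          * W (c.enc m' t (Fin.take t t.2.le y)) (y t)) := by
    rw [outProb, outProb, ← prod_mul_distrib,
      Real.sqrt_prod _ fun _ _ => mul_nonneg (hW0 _ _) (hW0 _ _)]
    rfl
  simp only [hprod]
  have key := pow_le_sum_prod_take (iInf_bhattacharyya_nonneg W)
    (fun t p y => √(W (c.enc m t p) y * W (c.enc m' t p) y))
    (fun _ _ _ => Real.sqrt_nonneg _)
    (fun t p => ciInf_le (Finite.bddBelow_range _) (c.enc m t p, c.enc m' t p))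
  exact key

theorem dec_some_eq_zero_of_perr_eq_zero (c : FBCode X Y M n L) (hW0 : ∀ x y, 0 ≤ W x y)
    (herr : c.Perr W = 0) {m : Fin M} {y : Fin n → Y} (hm : c.outProb W m y ≠ 0)
    {S : Finset (Fin M)} (hmS : m ∉ S) :
    c.dec y (some S) = 0 := by
  have hmiss_nonneg (m : Fin M) (y : Fin n → Y) (S : Finset (Fin M)) :
      0 ≤ if m ∈ S then 0 else c.dec y (some S) := by
    split_ifs
    exacts [le_rfl, c.dec_nonneg _ _]
  have hterm_nonneg (m : Fin M) (y : Fin n → Y) :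
      0 ≤ c.outProb W m y * ∑ S, if m ∈ S then 0 else c.dec y (some S) :=
    mul_nonneg (c.outProb_nonneg hW0 m y) (sum_nonneg fun S _ => hmiss_nonneg m y S)
  have hM : (M : ℝ)⁻¹ ≠ 0 := inv_ne_zero (Nat.cast_ne_zero.2 m.pos.ne')
  rw [Perr, mul_eq_zero, or_iff_right hM,
    sum_eq_zero_iff_of_nonneg fun m _ => sum_nonneg fun y _ => hterm_nonneg m y] at herr
  have hmy := (sum_eq_zero_iff_of_nonneg fun y _ => hterm_nonneg m y).1 (herr m (mem_univ m)) y
    (mem_univ y)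
  rw [mul_eq_zero, or_iff_right hm, sum_eq_zero_iff_of_nonneg fun S _ => hmiss_nonneg m y S] at hmy
  simpa [hmS] using hmy S (mem_univ S)

theorem dec_none_eq_one_of_perr_eq_zero (c : FBCode X Y M n 1) (hW0 : ∀ x y, 0 ≤ W x y)
    (herr : c.Perr W = 0) {m m' : Fin M} (hmm' : m ≠ m') {y : Fin n → Y}
    (hm : c.outProb W m y ≠ 0) (hm' : c.outProb W m' y ≠ 0) :
    c.dec y none = 1 := by
  have hsome (S : Finset (Fin M)) : c.dec y (some S) = 0 := by
    by_contra hS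
    have hmS : m ∈ S := by_contra (hS <| c.dec_some_eq_zero_of_perr_eq_zero hW0 herr hm ·)
    have hm'S : m' ∈ S := by_contra (hS <| c.dec_some_eq_zero_of_perr_eq_zero hW0 herr hm' ·)
    exact (c.dec_size y S hS).not_gt (one_lt_card.2 ⟨m, hmS, m', hm'S, hmm'⟩)
  simpa [hsome] using c.dec_sum y

theorem sum_sqrt_outProb_mul_le_pera (c : FBCode X Y 2 n 1) (hW0 : ∀ x y, 0 ≤ W x y)
    (herr : c.Perr W = 0) :
    ∑ y, √(c.outProb W 0 y * c.outProb W 1 y) ≤ c.Pera W := by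
  rw [Pera, Fin.sum_univ_two, ← sum_add_distrib, mul_sum]
  refine sum_le_sum fun y _ => ?_
  have h0 := c.outProb_nonneg hW0 0 y
  have h1 := c.outProb_nonneg hW0 1 y
  by_cases hpos : c.outProb W 0 y ≠ 0 ∧ c.outProb W 1 y ≠ 0
  · rw [c.dec_none_eq_one_of_perr_eq_zero hW0 herr (by decide) hpos.1 hpos.2, mul_one, mul_one]
    push_cast
    exact Real.sqrt_le_iff.2
      ⟨by positivity, by nlinarith [sq_nonneg (c.outProb W 0 y - c.outProb W 1 y)]⟩
  · rw [mul_eq_zero.2 (by tauto), Real.sqrt_zero]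
    have := c.dec_nonneg y none
    positivity

end FBCode

theorem pera_ge_half_bhattacharyya_pow_general {X Y : Type} [Fintype X] [Fintype Y]
    (W : X → Y → ℝ) (hW0 : ∀ x y, 0 ≤ W x y) (n : ℕ)
    (c : FBCode X Y 2 n 1) (herrfree : FBCode.Perr W c = 0) :
    (1 / 2) * (⨅ p : X × X, ∑ y, Real.sqrt (W p.1 y * W p.2 y)) ^ n
      ≤ FBCode.Pera W c := by
  have hβ : 0 ≤ (⨅ p : X × X, bhattacharyya W p.1 p.2) ^ n :=
    pow_nonneg (iInf_bhattacharyya_nonneg W) n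
  calc (1 / 2) * (⨅ p : X × X, bhattacharyya W p.1 p.2) ^ n
      ≤ (⨅ p : X × X, bhattacharyya W p.1 p.2) ^ n := by linarith
    _ ≤ ∑ y, √(c.outProb W 0 y * c.outProb W 1 y) :=
      c.pow_iInf_bhattacharyya_le_sum_sqrt_outProb hW0 0 1
    _ ≤ c.Pera W := c.sum_sqrt_outProb_mul_le_pera hW0 herrfree

/-- every length-`n` error-free feedback code with two equiprobable
messages has erasure probability at least half the `n`-th power of the minimum
Bhattacharyya coefficient `min_{x,x̃} ∑_y √(W(y|x)W(y|x̃))`. -/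
theorem pera_ge_half_bhattacharyya_pow {X Y : Type} [Fintype X] [Fintype Y] [Nonempty X]
    (W : X → Y → ℝ) (hW0 : ∀ x y, 0 ≤ W x y) (hW1 : ∀ x, ∑ y, W x y = 1) (n : ℕ)
    (c : FBCode X Y 2 n 1) (herrfree : FBCode.Perr W c = 0) :
    (1 / 2) * (⨅ p : X × X, ∑ y, Real.sqrt (W p.1 y * W p.2 y)) ^ n
      ≤ FBCode.Pera W c :=
  pera_ge_half_bhattacharyya_pow_general W hW0 n c herrfree
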